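/- arXiv:1808.04349 — 8 statements merged into one kernel-verified Lean document; each statement's English description precedes it below -/
import Mathlib

section
/- For any n ≥ 2 and any round horizon h with 1 ≤ h ≤ n-1, in a 1-interval-connected dynamic ring on n nodes (at most one edge missing per round), if an agent is placed on each of the n nodes and all agents attempt to move one step clockwise each round (an agent is blocked in a round only if its clockwise edge is the missing edge), then after h rounds at least n - h of the agents have each visited exactly h + 1 distinct nodes. -/
/-!
An agent starting at `s` that is never blocked moves along its virtual trajectory
`s, s + 1, …, s + h`, which consists of `h + 1` distinct nodes as long as `h < n`.
It can only be blocked if the missing edge `miss k` of some round `k < h` lies on that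
trajectory, i.e. `s = miss k - k`. Each round therefore rules out at most one starting
node, so at most `h` agents leave their virtual trajectory within `h` rounds.
-/

open Finset

theorem eq_add_natCast_of_forall_miss_ne {G : Type*} [AddMonoidWithOne G] [DecidableEq G]
    {miss : ℕ → Option G} {p : G → ℕ → G} (hp0 : ∀ s, p s 0 = s)
    (hpstep : ∀ s r, p s (r + 1) = if miss r = some (p s r) then p s r else p s r + 1)
    {s : G} {r : ℕ} (hfree : ∀ k < r, miss k ≠ some (s + k)) :
    p s r = s + r := by
  induction r with
  | zero => simp [hp0]
  | succ r ih =>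
    have hpr : p s r = s + r := ih fun k hk => hfree k (Nat.lt_succ_of_lt hk)
    rw [hpstep, hpr, if_neg (hfree r (Nat.lt_succ_self r)), Nat.cast_succ, add_assoc]

theorem card_filter_exists_miss_eq_add_le {G : Type*} [AddGroupWithOne G] [Fintype G]
    [DecidableEq G] (miss : ℕ → Option G) (h : ℕ) :
    #{s : G | ∃ k < h, miss k = some (s + (k : G))} ≤ h := by
  calc #{s : G | ∃ k < h, miss k = some (s + (k : G))}
      ≤ #((range h).biUnion fun k => (miss k).toFinset.image (· - (k : G))) := by
        refine card_le_card fun s hs => ?_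
        obtain ⟨k, hk, hmiss⟩ := (mem_filter.mp hs).2
        exact mem_biUnion.mpr ⟨k, mem_range.mpr hk,
          mem_image.mpr ⟨s + (k : G), by simp [hmiss], add_sub_cancel_right s _⟩⟩
    _ ≤ #(range h) * 1 := card_biUnion_le_card_mul _ _ _ fun k _ =>
        card_image_le.trans (by cases miss k <;> simp)
    _ = h := by simp

theorem ZMod.card_image_add_natCast_range {n m : ℕ} (hm : m ≤ n) (s : ZMod n) :
    #((range m).image fun r : ℕ => s + r) = m := by
  rw [card_image_of_injOn, card_range]
  intro a ha b hb hab
  have hcast : ((a : ℕ) : ZMod n) = b := add_left_cancel hab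
  have ha' : a < n := (mem_range.mp ha).trans_le hm
  have hb' : b < n := (mem_range.mp hb).trans_le hm
  simpa [ZMod.val_cast_of_lt ha', ZMod.val_cast_of_lt hb'] using congrArg ZMod.val hcast

theorem stmt0_general (n : ℕ) [NeZero n] (miss : ℕ → Option (ZMod n))
    (p : ZMod n → ℕ → ZMod n)
    (hp0 : ∀ s, p s 0 = s)
    (hpstep : ∀ s r, p s (r + 1) =
      if miss r = some (p s r) then p s r else p s r + 1)
    (h : ℕ) (h2 : h ≤ n - 1) :
    n - h ≤ (Finset.univ.filter (fun s : ZMod n =>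
      ((Finset.range (h + 1)).image (fun r => p s r)).card = h + 1)).card := by
  have hvisits : ∀ s ∉ ({s : ZMod n | ∃ k < h, miss k = some (s + k)} : Finset _),
      #((range (h + 1)).image fun r => p s r) = h + 1 := by
    intro s hs
    simp only [mem_filter, mem_univ, true_and, not_exists, not_and] at hs
    have htraj : ∀ r ∈ range (h + 1), p s r = s + r := fun r hr =>
      eq_add_natCast_of_forall_miss_ne hp0 hpstep fun k hk =>
        hs k (hk.trans_le (Nat.lt_succ_iff.mp (mem_range.mp hr)))
    rw [image_congr htraj, ZMod.card_image_add_natCast_range (by have := NeZero.pos n; omega)]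
  calc n - h ≤ n - #{s : ZMod n | ∃ k < h, miss k = some (s + k)} :=
        Nat.sub_le_sub_left (card_filter_exists_miss_eq_add_le miss h) n
    _ = #({s : ZMod n | ∃ k < h, miss k = some (s + k)} : Finset _)ᶜ := by
        rw [card_compl, ZMod.card]
    _ ≤ _ := card_le_card fun s hs =>
        mem_filter.mpr ⟨mem_univ s, hvisits s (mem_compl.mp hs)⟩

/-- In a 1-interval-connected dynamic ring on `n` nodes (at most one edge missing
per round, the missing edge in round `r` being `miss r`, where the clockwise edge
at node `v` is labelled `v`), if an agent is placed on each node and every agent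
attempts to move clockwise each round (blocked only when its clockwise edge is the
missing edge), then after `h` rounds (`1 ≤ h ≤ n-1`) at least `n - h` agents have
each visited exactly `h + 1` distinct nodes. -/
theorem stmt0 (n : ℕ) [NeZero n] (hn : 2 ≤ n) (miss : ℕ → Option (ZMod n))
    (p : ZMod n → ℕ → ZMod n)
    (hp0 : ∀ s, p s 0 = s)
    (hpstep : ∀ s r, p s (r + 1) =
      if miss r = some (p s r) then p s r else p s r + 1)
    (h : ℕ) (h1 : 1 ≤ h) (h2 : h ≤ n - 1) :
    n - h ≤ (Finset.univ.filter (fun s : ZMod n =>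
      ((Finset.range (h + 1)).image (fun r => p s r)).card = h + 1)).card :=
  stmt0_general n miss p hp0 hpstep h h2
end

section
/- Model the blocking pattern as a function f : ℕ → Fin n ∪ {⊥}, where f(r) is the (at most one) missing edge in round r. Define the position of an agent starting at node s ∈ ZMod n by p_s(0) = s and p_s(r+1) = p_s(r) + 1 if edge p_s(r) is not missing at round r, else p_s(r+1) = p_s(r). Then for every h with 1 ≤ h ≤ n-1, the set of starting nodes s such that p_s(h) = s + h has cardinality at least n - h. -/
/-!
Call the agent from `s` on schedule at round `r` if it stands at `s + r`. An on-schedule agent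
that is not blocked in round `r` is still on schedule at round `r + 1`, and the missing edge `m`
of round `r` can block only the on-schedule agent standing at `m`, the one that started at
`m - r`. So each round loses at most one on-schedule agent, starting from the whole ring.
-/

open Finset

section RingWalk

variable {R : Type*} [AddGroupWithOne R] [Fintype R] [DecidableEq R]

def onSchedule (p : R → ℕ → R) (r : ℕ) : Finset R :=
  univ.filter fun s => p s r = s + r

def blockedAt (miss : ℕ → Option R) (r : ℕ) : Finset R :=
  univ.filter fun s => miss r = some (s + r)

theorem card_blockedAt_le_one (miss : ℕ → Option R) (r : ℕ) : #(blockedAt miss r) ≤ 1 := by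
  refine card_le_one.mpr fun a ha b hb => ?_
  simp only [blockedAt, mem_filter, mem_univ, true_and] at ha hb
  exact add_right_cancel (Option.some.inj (ha.symm.trans hb))

variable {miss : ℕ → Option R} {p : R → ℕ → R}

theorem onSchedule_sdiff_blockedAt_subset
    (hpstep : ∀ s r, p s (r + 1) = if miss r = some (p s r) then p s r else p s r + 1)
    (r : ℕ) : onSchedule p r \ blockedAt miss r ⊆ onSchedule p (r + 1) := by
  intro s hs
  simp only [onSchedule, blockedAt, mem_sdiff, mem_filter, mem_univ, true_and] at hs ⊢
  obtain ⟨hpos, hfree⟩ := hs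
  rw [hpstep, hpos, if_neg hfree, Nat.cast_succ, add_assoc]

theorem card_onSchedule_sub_one_le_succ
    (hpstep : ∀ s r, p s (r + 1) = if miss r = some (p s r) then p s r else p s r + 1)
    (r : ℕ) : #(onSchedule p r) - 1 ≤ #(onSchedule p (r + 1)) :=
  calc #(onSchedule p r) - 1 ≤ #(onSchedule p r) - #(blockedAt miss r) :=
        Nat.sub_le_sub_left (card_blockedAt_le_one miss r) _
    _ ≤ #(onSchedule p r \ blockedAt miss r) := le_card_sdiff _ _
    _ ≤ #(onSchedule p (r + 1)) := card_le_card (onSchedule_sdiff_blockedAt_subset hpstep r)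

theorem card_sub_le_card_onSchedule (hp0 : ∀ s, p s 0 = s)
    (hpstep : ∀ s r, p s (r + 1) = if miss r = some (p s r) then p s r else p s r + 1)
    (r : ℕ) : Fintype.card R - r ≤ #(onSchedule p r) := by
  induction r with
  | zero =>
    have hall : onSchedule p 0 = univ := by simp [onSchedule, hp0]
    simp [hall]
  | succ r ih =>
    have hstep := card_onSchedule_sub_one_le_succ hpstep r
    omega

end RingWalk

theorem stmt1_general (n : ℕ) [NeZero n] (miss : ℕ → Option (ZMod n))
    (p : ZMod n → ℕ → ZMod n)
    (hp0 : ∀ s, p s 0 = s)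
    (hpstep : ∀ s r, p s (r + 1) =
      if miss r = some (p s r) then p s r else p s r + 1)
    (h : ℕ) :
    n - h ≤ (Finset.univ.filter (fun s : ZMod n => p s h = s + (h : ZMod n))).card := by
  have := card_sub_le_card_onSchedule hp0 hpstep h
  rwa [ZMod.card] at this

/-- Blocking pattern `miss : ℕ → Option (ZMod n)` gives the (at most one) missing
edge each round, where the clockwise edge at node `v` is labelled `v`.  The agent
starting at `s` has position `p s`, with `p s 0 = s` and
`p s (r+1) = p s r + 1` unless the edge `p s r` is missing at round `r`.
Then for every `h` with `1 ≤ h ≤ n - 1`, the set of starting nodes `s` with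
`p s h = s + h` has cardinality at least `n - h`. -/
theorem stmt1 (n : ℕ) [NeZero n] (hn : 2 ≤ n) (miss : ℕ → Option (ZMod n))
    (p : ZMod n → ℕ → ZMod n)
    (hp0 : ∀ s, p s 0 = s)
    (hpstep : ∀ s r, p s (r + 1) =
      if miss r = some (p s r) then p s r else p s r + 1)
    (h : ℕ) (h1 : 1 ≤ h) (h2 : h ≤ n - 1) :
    n - h ≤ (Finset.univ.filter (fun s : ZMod n => p s h = s + (h : ZMod n))).card :=
  stmt1_general n miss p hp0 hpstep h
end

section
/- Two agents start at antipodal nodes of a 1-interval-connected dynamic ring on n nodes, and must reach a given target pair of antipodal nodes. Model each round by a bit b_r ∈ {0,1} per blocked direction: during an interval of T = ⌈n/2⌉ rounds, if the counter-clockwise traversal of a path of length x ≤ ⌊n/2⌋ is blocked in more than T - x rounds (so the counter-clockwise route fails), then the clockwise traversal of the complementary path of length ⌈n/2⌉ - x succeeds within the same T rounds. Formally: given a function miss : Fin T → Option (Fin n) (the missing edge each round), for any x ≤ ⌊n/2⌋, either an agent moving counter-clockwise along a fixed path of x consecutive edges completes all x edge-traversals within T rounds (being delayed only in rounds where the next needed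 edge is missing), or an agent moving clockwise along the complementary arc of the antipodal pair completes its traversal within T rounds. -/
/-! At most one edge is missing per round, so no round delays both of two edge-disjoint paths.
Hence the rounds delaying the counter-clockwise path and those delaying the clockwise one are
disjoint sets of rounds among `T`, and their sizes cannot exceed `T - x` and `x` simultaneously. -/

theorem Finset.disjoint_filter_exists_mem_eq_some {ι α : Type*} [DecidableEq α] (s : Finset ι)
    (f : ι → Option α) {P Q : Finset α} (hPQ : Disjoint P Q) :
    Disjoint (s.filter fun r => ∃ e ∈ P, f r = some e)
      (s.filter fun r => ∃ e ∈ Q, f r = some e) := by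
  refine Finset.disjoint_filter.mpr fun r _ ⟨e, heP, he⟩ ⟨e', heQ, he'⟩ => ?_
  obtain rfl : e = e' := Option.some.inj (he.symm.trans he')
  exact Finset.disjoint_left.mp hPQ heP heQ

theorem card_filter_exists_mem_eq_some_add_le {ι α : Type*} [Fintype ι] [DecidableEq α]
    (f : ι → Option α) {P Q : Finset α} (hPQ : Disjoint P Q) :
    (Finset.univ.filter fun r => ∃ e ∈ P, f r = some e).card +
      (Finset.univ.filter fun r => ∃ e ∈ Q, f r = some e).card ≤ Fintype.card ι := by
  classical
  rw [← Finset.card_union_of_disjoint (Finset.disjoint_filter_exists_mem_eq_some _ f hPQ)]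
  exact Finset.card_le_univ _

theorem stmt4_general (n x T : ℕ)
    (miss : Fin T → Option (ZMod n)) (P1 P2 : Finset (ZMod n))
    (hdisj : Disjoint P1 P2) :
    (Finset.univ.filter (fun r : Fin T => ∃ e ∈ P1, miss r = some e)).card ≤ T - x ∨
    (Finset.univ.filter (fun r : Fin T => ∃ e ∈ P2, miss r = some e)).card ≤ x := by
  have hcard := card_filter_exists_mem_eq_some_add_le miss hdisj
  rw [Fintype.card_fin] at hcard
  omega

/-- Two agents at antipodal nodes must reach a target antipodal pair within
`T = ⌈n/2⌉` rounds.  `miss r` is the (at most one) missing edge at round `r`.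
The counter-clockwise route is a path `P₁` of `x ≤ ⌊n/2⌋` edges; the clockwise
complementary route is a path `P₂` of `T - x` edges, disjoint from `P₁`.  An agent
traversing a path of length `ℓ` completes within `T` rounds iff it is delayed
(i.e. the missing edge lies on its path) in at most `T - ℓ` rounds.  Then either
the counter-clockwise traversal completes within `T` rounds, or the clockwise
traversal of the complementary path does. -/
theorem stmt4 (n x T : ℕ) [NeZero n] (hT : T = (n + 1) / 2) (hx : x ≤ n / 2)
    (miss : Fin T → Option (ZMod n)) (P1 P2 : Finset (ZMod n))
    (hdisj : Disjoint P1 P2) (h1 : P1.card = x) (h2 : P2.card = T - x) :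
    (Finset.univ.filter (fun r : Fin T => ∃ e ∈ P1, miss r = some e)).card ≤ T - x ∨
    (Finset.univ.filter (fun r : Fin T => ∃ e ∈ P2, miss r = some e)).card ≤ x :=
  stmt4_general n x T miss P1 P2 hdisj
end

section
/- Pigeonhole for shifted intervals: let n ≥ 2, T = ⌈n/k⌉ for some k ≥ 1 dividing into consideration, and suppose an agent must traverse a directed path of x edges within T rounds, being delayed exactly in rounds whose missing edge lies on its remaining path, where at most one edge is missing per round. If the agent fails (is delayed in more than T - x rounds), then there are at least T - x + 1 rounds among the T in which the missing edge is NOT on the complementary path of length T - x (traversed in the opposite direction), hence an agent on the complementary path traversing opposite-direction completes within T rounds. -/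
open Finset

section Rounds

variable {ι α : Type*} [Fintype ι] (miss : ι → Option α)

/-- A round misses at most one edge, so it cannot delay agents on two disjoint paths. -/
theorem card_filter_exists_le_card_filter_forall_ne {P Q : Finset α}
    [DecidablePred fun r => ∃ e ∈ P, miss r = some e]
    [DecidablePred fun r => ∀ e ∈ Q, miss r ≠ some e] (hdisj : Disjoint P Q) :
    #{r | ∃ e ∈ P, miss r = some e} ≤ #{r | ∀ e ∈ Q, miss r ≠ some e} := by
  refine card_le_card fun r hr => ?_
  obtain ⟨e, heP, hre⟩ := (mem_filter.mp hr).2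
  refine mem_filter.mpr ⟨mem_univ r, fun e' heQ hre' => ?_⟩
  rw [hre, Option.some_inj] at hre'
  exact disjoint_left.mp hdisj heP (hre' ▸ heQ)

theorem card_filter_exists_add_card_filter_forall_ne (Q : Finset α)
    [DecidablePred fun r => ∃ e ∈ Q, miss r = some e]
    [DecidablePred fun r => ∀ e ∈ Q, miss r ≠ some e] :
    #{r | ∃ e ∈ Q, miss r = some e} + #{r | ∀ e ∈ Q, miss r ≠ some e} = Fintype.card ι := by
  rw [← card_univ, ← card_filter_add_card_filter_not (s := univ) fun r => ∃ e ∈ Q, miss r = some e]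
  congr 2
  simp only [not_exists, not_and, ne_eq]

end Rounds

theorem stmt12_general (n T x : ℕ) [NeZero n]
    (miss : Fin T → Option (ZMod n)) (P1 P2 : Finset (ZMod n))
    (hdisj : Disjoint P1 P2)
    (hfail : T - x <
      (Finset.univ.filter (fun r : Fin T => ∃ e ∈ P1, miss r = some e)).card) :
    T - x + 1 ≤
      (Finset.univ.filter (fun r : Fin T => ∀ e ∈ P2, miss r ≠ some e)).card ∧
    (Finset.univ.filter (fun r : Fin T => ∃ e ∈ P2, miss r = some e)).card ≤ x := by
  have hle := card_filter_exists_le_card_filter_forall_ne miss hdisj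
  have htotal := card_filter_exists_add_card_filter_forall_ne miss P2
  rw [Fintype.card_fin] at htotal
  omega

/-- Counting lemma for the placement phase: at most one edge is missing per round
(`miss r`), `P₁` (length `x`) and `P₂` (length `T - x`) are edge-disjoint paths,
and an agent traversing a path of length `ℓ` completes within `T` rounds iff it
is delayed (its path contains the missing edge) in at most `T - ℓ` rounds.  If
the `P₁`-agent fails (delayed in more than `T - x` rounds), then in at least
`T - x + 1` of the `T` rounds the missing edge is not on `P₂`, hence the agent on
the complementary path `P₂` is delayed at most `x` times and completes within `T`
rounds. -/
theorem stmt12 (n T x : ℕ) [NeZero n] (hx : x ≤ T)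
    (miss : Fin T → Option (ZMod n)) (P1 P2 : Finset (ZMod n))
    (hdisj : Disjoint P1 P2) (h1 : P1.card = x) (h2 : P2.card = T - x)
    (hfail : T - x <
      (Finset.univ.filter (fun r : Fin T => ∃ e ∈ P1, miss r = some e)).card) :
    T - x + 1 ≤
      (Finset.univ.filter (fun r : Fin T => ∀ e ∈ P2, miss r ≠ some e)).card ∧
    (Finset.univ.filter (fun r : Fin T => ∃ e ∈ P2, miss r = some e)).card ≤ x :=
  stmt12_general n T x miss P1 P2 hdisj hfail
end

section
/- In a static ring of n nodes with k agents placed on k consecutive nodes, where in every round the whole configuration is a rotation of the initial one by at most one position (each round, the configuration rotates by +1, -1, or 0), any schedule that visits every node infinitely often has some node whose consecutive visits are at least n - k rounds apart. -/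
/-!
If every node is visited, the offset walk `s` cannot stay inside `n - k` consecutive values
(a block of width `k` sliding over `n - k` positions misses a node), so somewhere it travels a
distance `n - k` in one direction. Cut that travel down to an upcrossing: a last round `p` at
the starting value and a first later round `q` at distance `n - k`. During `(p, q]` the block
lies within the `n - 1` positions following the node at its trailing end at round `p`, so that
node, visited at `p`, is not visited again before a round later than `q ≥ p + (n - k)`.
-/

def Visited (n k : ℕ) (s : ℕ → ℤ) (v : ZMod n) (r : ℕ) : Prop :=
  ∃ j : ℕ, j < k ∧ ((s r + (j : ℤ) : ℤ) : ZMod n) = v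

section Walk

variable {s : ℕ → ℤ}

lemma abs_sub_le_of_abs_step_le (hstep : ∀ r, |s (r + 1) - s r| ≤ 1) {a b : ℕ} (hab : a ≤ b) :
    |s b - s a| ≤ (b : ℤ) - a := by
  induction b, hab using Nat.le_induction with
  | base => simp
  | succ m _ ih =>
    calc |s (m + 1) - s a| = |(s (m + 1) - s m) + (s m - s a)| := by ring_nf
      _ ≤ |s (m + 1) - s m| + |s m - s a| := abs_add_le _ _
      _ ≤ ((m + 1 : ℕ) : ℤ) - a := by push_cast; linarith [hstep m]

lemma exists_upcrossing (hstep : ∀ r, |s (r + 1) - s r| ≤ 1) {a b : ℤ} (hab : a < b)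
    {p q : ℕ} (hpq : p ≤ q) (hp : s p ≤ a) (hq : b ≤ s q) :
    ∃ p' q', p' < q' ∧ s p' = a ∧ s q' = b ∧ ∀ t, p' < t → t ≤ q' → a < s t ∧ s t ≤ b := by
  classical
  have hex : ∃ t, p ≤ t ∧ b ≤ s t := ⟨q, hpq, hq⟩
  obtain ⟨q', ⟨hpq', hq'⟩, below⟩ : ∃ q', (p ≤ q' ∧ b ≤ s q') ∧ ∀ t, p ≤ t → t < q' → s t < b :=
    ⟨Nat.find hex, Nat.find_spec hex, fun t hpt htq =>
      lt_of_not_ge fun h => Nat.find_min hex htq ⟨hpt, h⟩⟩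
  obtain ⟨p', ⟨hpp', hp'⟩, hp'q', above⟩ : ∃ p', (p ≤ p' ∧ s p' ≤ a) ∧ p' ≤ q' ∧
      ∀ t, p' < t → t ≤ q' → a < s t :=
    ⟨_, Nat.findGreatest_spec (P := fun t => p ≤ t ∧ s t ≤ a) hpq' ⟨le_rfl, hp⟩,
      Nat.findGreatest_le _, fun t hpt htq =>
        lt_of_not_ge fun h => Nat.findGreatest_is_greatest hpt htq
          ⟨(Nat.le_findGreatest hpq' ⟨le_rfl, hp⟩).trans hpt.le, h⟩⟩
  replace hp'q' : p' < q' := lt_of_le_of_ne hp'q' fun h => by rw [h] at hp'; omega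
  have hq'b : s q' = b := by
    have hstep' := abs_le.mp (hstep (q' - 1))
    rw [Nat.sub_add_cancel (by omega)] at hstep'
    have := below (q' - 1) (by omega) (by omega)
    omega
  refine ⟨p', q', hp'q', ?_, hq'b, fun t hpt htq => ⟨above t hpt htq, ?_⟩⟩
  · have := above (p' + 1) (by omega) hp'q'
    have := abs_le.mp (hstep p')
    omega
  · rcases htq.lt_or_eq with h | rfl
    · exact (below t (by omega) h).le
    · exact hq'b.le

end Walk

section Visits

variable {n k : ℕ} {s : ℕ → ℤ}

lemma visited_of_le_of_lt {a : ℤ} {r : ℕ} (h₁ : s r ≤ a) (h₂ : a < s r + k) :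
    Visited n k s a r :=
  ⟨(a - s r).toNat, by omega, by rw [Int.toNat_of_nonneg (by omega)]; ring_nf⟩

lemma not_visited_of_lt_of_add_le {b : ℤ} {r : ℕ} (h₁ : b < s r) (h₂ : s r + k ≤ b + n) :
    ¬ Visited n k s b r := by
  rintro ⟨j, hj, hv⟩
  rw [ZMod.intCast_eq_intCast_iff_dvd_sub] at hv
  have := Int.eq_zero_of_abs_lt_dvd hv (abs_lt.mpr ⟨by omega, by omega⟩)
  omega

lemma exists_add_le_of_forall_visited (hvis : ∀ v : ZMod n, ∃ r, Visited n k s v r) :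
    ∃ p q, s p + ((n : ℤ) - k) ≤ s q := by
  by_contra! h
  obtain ⟨_, ⟨r₀, rfl⟩, hmin⟩ := Int.exists_least_of_bdd (P := fun z => ∃ r, s r = z)
    ⟨s 0 - (n - k), by rintro _ ⟨r, rfl⟩; linarith [h r 0]⟩ ⟨s 0, 0, rfl⟩
  obtain ⟨r, hr⟩ := hvis ((s r₀ - 1 : ℤ) : ZMod n)
  exact not_visited_of_lt_of_add_le (by linarith [hmin _ ⟨r, rfl⟩]) (by linarith [h r₀ r]) hr

lemma exists_long_gap_of_add_le (hk : 0 < k) (hkn : k < n)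
    (hstep : ∀ r, |s (r + 1) - s r| ≤ 1) {p q : ℕ} (hpq : s p + ((n : ℤ) - k) ≤ s q) :
    ∃ v p' q', p' < q' ∧ Visited n k s v p' ∧
      (∀ t, p' < t → t ≤ q' → ¬ Visited n k s v t) ∧ n - k ≤ q' - p' := by
  have hne : p ≠ q := by rintro rfl; omega
  rcases hne.lt_or_gt with hlt | hgt
  · obtain ⟨p', q', hlt', hp', hq', hmid⟩ :=
      exists_upcrossing hstep (a := s p) (b := s p + (n - k)) (by omega) hlt.le le_rfl hpq
    have := abs_le.mp (abs_sub_le_of_abs_step_le hstep hlt'.le)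
    refine ⟨(s p : ZMod n), p', q', hlt', visited_of_le_of_lt (by omega) (by omega),
      fun t hpt htq => ?_, by omega⟩
    exact not_visited_of_lt_of_add_le (hmid t hpt htq).1 (by linarith [hmid t hpt htq])
  · have hstep' : ∀ r, |-s (r + 1) - -s r| ≤ 1 := fun r => by
      rw [show -s (r + 1) - -s r = -(s (r + 1) - s r) by ring, abs_neg]; exact hstep r
    obtain ⟨p', q', hlt', hp', hq', hmid⟩ := exists_upcrossing (s := fun r => -s r) hstep'
      (a := -s q) (b := -s q + (n - k)) (by omega) hgt.le le_rfl (by linarith)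
    have := abs_le.mp (abs_sub_le_of_abs_step_le hstep hlt'.le)
    -- moving down, the trailing end of the block is its top node
    have hnode : ((s q + k - 1 - n : ℤ) : ZMod n) = ((s q + k - 1 : ℤ) : ZMod n) := by simp
    refine ⟨((s q + k - 1 : ℤ) : ZMod n), p', q', hlt', visited_of_le_of_lt (by omega) (by omega),
      fun t hpt htq => ?_, by omega⟩
    rw [← hnode]
    exact not_visited_of_lt_of_add_le (by linarith [hmid t hpt htq]) (by linarith [hmid t hpt htq])

end Visits

theorem stmt13_general (n k : ℕ) (hk : 1 ≤ k) (hkn : k < n) (s : ℕ → ℤ)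
    (hstep : ∀ r, |s (r + 1) - s r| ≤ 1)
    (hio : ∀ (v : ZMod n) (r : ℕ), ∃ r', r ≤ r' ∧
      ∃ j : ℕ, j < k ∧ ((s r' + (j : ℤ) : ℤ) : ZMod n) = v) :
    ∃ (v : ZMod n) (r0 r1 : ℕ), r0 < r1 ∧
      (∃ j : ℕ, j < k ∧ ((s r0 + (j : ℤ) : ℤ) : ZMod n) = v) ∧
      (∃ j : ℕ, j < k ∧ ((s r1 + (j : ℤ) : ℤ) : ZMod n) = v) ∧
      (∀ r, r0 < r → r < r1 → ¬ ∃ j : ℕ, j < k ∧ ((s r + (j : ℤ) : ℤ) : ZMod n) = v) ∧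
      n - k ≤ r1 - r0 := by
  classical
  obtain ⟨p, q, hpq⟩ := exists_add_le_of_forall_visited fun v => (hio v 0).imp fun _ h => h.2
  obtain ⟨v, r0, q', hlt, hv0, hgap, hlen⟩ := exists_long_gap_of_add_le hk hkn hstep hpq
  have hnext : ∃ r, q' < r ∧ Visited n k s v r := (hio v (q' + 1)).imp fun _ h => ⟨h.1, h.2⟩
  obtain ⟨hq'r1, hv1⟩ := Nat.find_spec hnext
  refine ⟨v, r0, Nat.find hnext, by omega, hv0, hv1, fun r hr0 hr1 => ?_, by omega⟩
  rcases le_or_gt r q' with h | h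
  · exact hgap r hr0 h
  · exact fun hv => Nat.find_min hnext hr1 ⟨h, hv⟩

/-- Local-visibility lower bound core: `k < n` agents occupy the rotating block
`{s r, s r + 1, …, s r + k - 1}` (in `ZMod n`) with offset `s : ℕ → ℤ`, `s 0 = 0`
and `|s (r+1) - s r| ≤ 1`.  If every node is visited infinitely often, then some
node has two consecutive visits at least `n - k` rounds apart. -/
theorem stmt13 (n k : ℕ) [NeZero n] (hk : 1 ≤ k) (hkn : k < n) (s : ℕ → ℤ)
    (hs0 : s 0 = 0) (hstep : ∀ r, |s (r + 1) - s r| ≤ 1)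
    (hio : ∀ (v : ZMod n) (r : ℕ), ∃ r', r ≤ r' ∧
      ∃ j : ℕ, j < k ∧ ((s r' + (j : ℤ) : ℤ) : ZMod n) = v) :
    ∃ (v : ZMod n) (r0 r1 : ℕ), r0 < r1 ∧
      (∃ j : ℕ, j < k ∧ ((s r0 + (j : ℤ) : ℤ) : ZMod n) = v) ∧
      (∃ j : ℕ, j < k ∧ ((s r1 + (j : ℤ) : ℤ) : ZMod n) = v) ∧
      (∀ r, r0 < r → r < r1 → ¬ ∃ j : ℕ, j < k ∧ ((s r + (j : ℤ) : ℤ) : ZMod n) = v) ∧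
      n - k ≤ r1 - r0 :=
  stmt13_general n k hk hkn s hstep hio
end

section
/- If k agents on a line of ℓ nodes must each visit nodes so that collectively every node is visited once per window, the minimum possible idle time is at least 2ℓ/k; consequently, for patrolling an n-node dynamic ring where the adversary permanently removes one fixed edge (reducing to a line of n nodes), any k-agent patrolling algorithm has stable idle time at least 2n/k. -/
/-!
Let `m = ⌊I/2⌋ + 1`. Since `I < 2m`, every round `t ≥ m - 1` is within distance `m - 1` of a
visit to any given node. By induction on `i`, from round `i·m` on at least `i` agents stand
strictly left of node `i·m`: a visit to node `(i-1)·m` close to `t` adds one agent to the `i - 1`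
agents left of that node, and in fewer than `m` rounds none of these `i` agents can reach node
`i·m`. If `n > k·m`, the case `i = k + 1` produces `k + 1` distinct agents, which is absurd.
Hence `n ≤ k·(⌊I/2⌋ + 1)`, that is `2(n - k) ≤ k·I`.
-/

open Finset

namespace LinePatrol

section UnitSteps

variable {f : ℕ → ℕ} (hf : ∀ r, f (r + 1) ≤ f r + 1 ∧ f r ≤ f (r + 1) + 1)
include hf

theorem le_add_of_unit_steps (r d : ℕ) : f (r + d) ≤ f r + d ∧ f r ≤ f (r + d) + d := by
  induction d with
  | zero => simp
  | succ d ih =>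
    have := hf (r + d)
    rw [← add_assoc]
    omega

theorem lt_add_of_unit_steps {t u m : ℕ} (htu : t < u + m) (hut : u < t + m) :
    f t < f u + m := by
  rcases le_total u t with h | h
  · obtain ⟨d, rfl⟩ := Nat.exists_eq_add_of_le h
    have := (le_add_of_unit_steps hf u d).1
    omega
  · obtain ⟨d, rfl⟩ := Nat.exists_eq_add_of_le h
    have := (le_add_of_unit_steps hf t d).2
    omega

end UnitSteps

variable {ι : Type*}

def VisitedInEveryWindow (q : ι → ℕ → ℕ) (I w : ℕ) : Prop :=
  ∀ r, ∃ u, r ≤ u ∧ u < r + I ∧ ∃ j, q j u = w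

variable [Fintype ι]

def numBelow (q : ι → ℕ → ℕ) (t x : ℕ) : ℕ := #{j | q j t < x}

variable {q : ι → ℕ → ℕ}

theorem numBelow_le_numBelow {t t' x x' : ℕ} (h : ∀ j, q j t < x → q j t' < x') :
    numBelow q t x ≤ numBelow q t' x' := by
  refine card_le_card fun j hj => ?_
  simp only [mem_filter, mem_univ, true_and] at hj ⊢
  exact h j hj

theorem numBelow_lt_numBelow_succ {t w : ℕ} {j₀ : ι} (hj₀ : q j₀ t = w) :
    numBelow q t w < numBelow q t (w + 1) := by
  refine card_lt_card ((ssubset_iff_of_subset fun j hj => ?_).2 ⟨j₀, ?_, ?_⟩) <;>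
    simp_all only [mem_filter, mem_univ, true_and] <;> omega

variable (hq : ∀ j r, q j (r + 1) ≤ q j r + 1 ∧ q j r ≤ q j (r + 1) + 1)
  {I m : ℕ} (hI : I < 2 * m)
include hq hI

theorem succ_le_numBelow_add {w T i : ℕ} (hw : VisitedInEveryWindow q I w)
    (hT : ∀ t, T ≤ t → i ≤ numBelow q t w) {t : ℕ} (ht : T + m ≤ t) :
    i + 1 ≤ numBelow q t (w + m) := by
  obtain ⟨u, hru, hur, j₀, hj₀⟩ := hw (t + 1 - m)
  have htu : t < u + m := by omega
  have hut : u < t + m := by omega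
  calc i + 1 ≤ numBelow q u w + 1 := Nat.succ_le_succ (hT u (by omega))
    _ ≤ numBelow q u (w + 1) := numBelow_lt_numBelow_succ hj₀
    _ ≤ numBelow q t (w + m) := numBelow_le_numBelow fun j hj =>
        (lt_add_of_unit_steps (hq j) htu hut).trans_le (by omega)

theorem le_numBelow_mul {i : ℕ} (hcov : ∀ i' < i, VisitedInEveryWindow q I (i' * m))
    (t : ℕ) (ht : i * m ≤ t) : i ≤ numBelow q t (i * m) := by
  induction i generalizing t with
  | zero => exact Nat.zero_le _
  | succ i ih =>
    rw [Nat.succ_mul] at ht ⊢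
    exact succ_le_numBelow_add hq hI (hcov i i.lt_succ_self)
      (ih fun i' hi' => hcov i' (hi'.trans i.lt_succ_self)) ht

theorem le_card_mul {n : ℕ} (hcov : ∀ w < n, VisitedInEveryWindow q I w) :
    n ≤ Fintype.card ι * m := by
  by_contra! hn
  have hk := le_numBelow_mul hq hI (i := Fintype.card ι + 1)
    (fun i' hi' => hcov _ ((Nat.mul_le_mul_right m (Nat.lt_succ_iff.mp hi')).trans_lt hn))
    _ le_rfl
  exact (hk.trans (card_le_univ _)).not_gt (Nat.lt_succ_self _)

end LinePatrol

theorem stmt15_general (n k I : ℕ)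
    (p : Fin k → ℕ → Fin n)
    (hstep : ∀ i r, (p i (r + 1)).val ≤ (p i r).val + 1 ∧
      (p i r).val ≤ (p i (r + 1)).val + 1)
    (hcover : ∀ (v : Fin n) (r : ℕ), ∃ r', r ≤ r' ∧ r' < r + I ∧ ∃ i, p i r' = v) :
    2 * (n - k) ≤ k * I := by
  have hn : n ≤ k * (I / 2 + 1) := by
    simpa using LinePatrol.le_card_mul (q := fun i r => (p i r).val) (I := I) (m := I / 2 + 1)
      hstep (by omega) fun w hw r => by
        obtain ⟨r', hr, hr', i, hi⟩ := hcover ⟨w, hw⟩ r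
        exact ⟨r', hr, hr', i, congrArg Fin.val hi⟩
  calc 2 * (n - k) ≤ 2 * (k * (I / 2)) := by rw [mul_add, mul_one] at hn; omega
    _ = k * (2 * (I / 2)) := by ring
    _ ≤ k * I := Nat.mul_le_mul_left k (Nat.mul_div_le I 2)

/-- Line patrolling lower bound: `k` agents move on a path of `n` nodes one step
per round; if every node is visited in every window of `I` consecutive rounds,
then `I ≥ 2(n - k)/k`, i.e. `2(n - k) ≤ k·I`.  (Each agent can repeatedly cover
at most `⌊I/2⌋ + 1` distinct nodes, and `k·(⌊I/2⌋ + 1) ≥ n`.) -/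
theorem stmt15 (n k I : ℕ) (hk : 1 ≤ k) (hkn : k ≤ n)
    (p : Fin k → ℕ → Fin n)
    (hstep : ∀ i r, (p i (r + 1)).val ≤ (p i r).val + 1 ∧
      (p i r).val ≤ (p i (r + 1)).val + 1)
    (hcover : ∀ (v : Fin n) (r : ℕ), ∃ r', r ≤ r' ∧ r' < r + I ∧ ∃ i, p i r' = v) :
    2 * (n - k) ≤ k * I :=
  stmt15_general n k I p hstep hcover
end

section
/- If an agent p : ℕ → Fin m on a path (line) of m nodes satisfies |p(r+1) - p(r)| ≤ 1 for all rounds r, and visits every node of a set V ⊆ Fin m at least once in every window of T consecutive rounds, then the diameter of V is at most ⌊T/2⌋. -/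
lemma lipschitz16 (p : ℕ → ℤ) (hstep : ∀ r, |p (r + 1) - p r| ≤ 1) :
    ∀ a b : ℕ, a ≤ b → |p b - p a| ≤ (b : ℤ) - a := by
  intro a b hab
  induction b, hab using Nat.le_induction with
  | base => simp
  | succ n hn ih =>
    have h1 := hstep n
    have : p (n+1) - p a = (p (n+1) - p n) + (p n - p a) := by ring
    calc |p (n+1) - p a| ≤ |p (n+1) - p n| + |p n - p a| := by rw [this]; exact abs_add_le _ _
      _ ≤ 1 + ((n : ℤ) - a) := add_le_add h1 ih
      _ = ((n+1 : ℕ) : ℤ) - a := by push_cast; ring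

/-- An agent on a line (`p : ℕ → ℤ`, one step per round) that visits every node
of a finite set `V` at least once in every window of `T` consecutive rounds can
only do so if the diameter of `V` is at most `T/2`: for all `u, w ∈ V`,
`2(w - u) ≤ T`. -/
theorem stmt16 (T : ℕ) (p : ℕ → ℤ) (hstep : ∀ r, |p (r + 1) - p r| ≤ 1)
    (V : Finset ℤ)
    (hvisit : ∀ r : ℕ, ∀ v ∈ V, ∃ r', r ≤ r' ∧ r' < r + T ∧ p r' = v) :
    ∀ u ∈ V, ∀ w ∈ V, 2 * (w - u) ≤ (T : ℤ) := by
  intro u hu w hw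
  -- a visit to u
  obtain ⟨t, -, -, htu⟩ := hvisit 0 u hu
  -- a visit to w after t
  obtain ⟨s, hts, -, hsw⟩ := hvisit t w hw
  -- last visit to u in [t, s]
  set S := (Finset.Icc t s).filter (fun x => p x = u) with hS
  have hSne : S.Nonempty := ⟨t, by simp [hS, hts, htu]⟩
  set t' := S.max' hSne with ht'
  have ht'mem := S.max'_mem hSne
  obtain ⟨hmem, ht'u⟩ := Finset.mem_filter.mp ht'mem
  obtain ⟨htt', ht's⟩ := Finset.mem_Icc.mp hmem
  -- next visit to u after t'
  obtain ⟨t'', ht''ge, ht''lt, ht''u⟩ := hvisit (t' + 1) u hu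
  have ht''s : s < t'' := by
    by_contra h
    push_neg at h
    have : t'' ∈ S := by
      simp only [hS, Finset.mem_filter, Finset.mem_Icc]
      exact ⟨⟨by omega, h⟩, ht''u⟩
    exact absurd (S.le_max' _ this) (by omega)
  have h1 : |w - u| ≤ (s : ℤ) - t' := by
    have := lipschitz16 p hstep t' s ht's
    rwa [hsw, ht'u] at this
  have h2 : |w - u| ≤ (t'' : ℤ) - s := by
    have := lipschitz16 p hstep s t'' ht''s.le
    rw [ht''u, hsw] at this
    calc |w - u| = |u - w| := abs_sub_comm _ _
      _ ≤ _ := this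
  have h3 : (t'' : ℤ) - t' ≤ T := by
    have : t'' < t' + 1 + T := ht''lt
    omega
  have habs : w - u ≤ |w - u| := le_abs_self _
  linarith
end

section
/- Single agent containment in an unknown dynamic ring: for any function p : ℕ → ZMod n modeling an agent that each round either stays or attempts to cross one of its two incident edges, there exists an adaptive adversary (a choice of at most one missing edge per round, allowed to depend on the agent's intended move) such that the agent never leaves the two-node set {p(0), p(0)+1}; hence a single agent visits at most 2 nodes. -/
/-!
The adversary keeps the agent on the edge `{s, s + 1}` by removing the edge `s - 1 — s` whenever the
agent at `s` tries to step counter-clockwise, and the edge `s + 1 — s + 2` whenever the agent at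
`s + 1` tries to step clockwise. Every other attempted move stays inside `{s, s + 1}`, and since the
adversary sees the intended move before choosing, the two-node set is an invariant of the run.
-/

section RingTrap

variable {R : Type*} [Ring R] [DecidableEq R]

-- The edge labelled `v` joins `v` and `v + 1`.
def trapEdge (s q : R) (m : ℤ) : Option R :=
  if q = s ∧ m = -1 then some (s - 1) else if q = s + 1 ∧ m = 1 then some q else none

def ringMove (q : R) (m : ℤ) (e : Option R) : R :=
  if (m = 1 ∧ e = some q) ∨ (m = -1 ∧ e = some (q - 1)) then q else q + (m : R)

theorem ringMove_trapEdge_mem_pair {s q : R} {m : ℤ} (hq : q = s ∨ q = s + 1)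
    (hm : m = -1 ∨ m = 0 ∨ m = 1) :
    ringMove q m (trapEdge s q m) = s ∨ ringMove q m (trapEdge s q m) = s + 1 := by
  rcases hm with rfl | rfl | rfl <;> rcases hq with hq | hq <;> subst q <;>
    simp [ringMove, trapEdge, sub_eq_add_neg]

variable (σ : List (Option R) → ℤ) (s : R)

-- The removals depend on the position and vice versa, so both are built together round by round.
def trapRun : ℕ → List (Option R) × R
  | 0 => ([], s)
  | r + 1 =>
    let e := trapEdge s (trapRun r).2 (σ (trapRun r).1)
    ((trapRun r).1 ++ [e], ringMove (trapRun r).2 (σ (trapRun r).1) e)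

def trapMiss (r : ℕ) : Option R :=
  trapEdge s (trapRun σ s r).2 (σ (trapRun σ s r).1)

theorem trapRun_fst (r : ℕ) :
    (trapRun σ s r).1 = List.ofFn fun i : Fin r => trapMiss σ s i := by
  induction r with
  | zero => rfl
  | succ r ih =>
    simp only [List.ofFn_succ', List.concat_eq_append, Fin.val_castSucc, Fin.val_last, ← ih]
    rfl

theorem trapRun_snd_mem_pair (hσ : ∀ h, σ h = -1 ∨ σ h = 0 ∨ σ h = 1) (r : ℕ) :
    (trapRun σ s r).2 = s ∨ (trapRun σ s r).2 = s + 1 := by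
  induction r with
  | zero => exact Or.inl rfl
  | succ r ih => exact ringMove_trapEdge_mem_pair ih (hσ _)

theorem eq_trapRun_snd {p : ℕ → R} (h0 : p 0 = s)
    (hp : ∀ r, p (r + 1) =
      ringMove (p r) (σ (List.ofFn fun i : Fin r => trapMiss σ s i)) (trapMiss σ s r))
    (r : ℕ) : p r = (trapRun σ s r).2 := by
  induction r with
  | zero => exact h0
  | succ r ih => rw [hp, ih, ← trapRun_fst]; rfl

end RingTrap

theorem stmt19_general (n : ℕ) (s : ZMod n)
    (σ : List (Option (ZMod n)) → ℤ)
    (hσ : ∀ h, σ h = -1 ∨ σ h = 0 ∨ σ h = 1) :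
    ∃ miss : ℕ → Option (ZMod n),
      ∀ p : ℕ → ZMod n, p 0 = s →
        (∀ r, p (r + 1) =
          if (σ (List.ofFn (fun i : Fin r => miss i)) = 1 ∧ miss r = some (p r)) ∨
             (σ (List.ofFn (fun i : Fin r => miss i)) = -1 ∧ miss r = some (p r - 1))
          then p r
          else p r + ((σ (List.ofFn (fun i : Fin r => miss i)) : ℤ) : ZMod n)) →
        ∀ r, p r = s ∨ p r = s + 1 := by
  refine ⟨trapMiss σ s, fun p h0 hp r => ?_⟩
  rw [eq_trapRun_snd σ s h0 hp r]
  exact trapRun_snd_mem_pair σ s hσ r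

/-- Single-agent containment in an unknown dynamic ring (`n ≥ 3`): the agent's
strategy `σ` maps the history of observed missing edges to an intended move in
`{-1, 0, 1}` (the clockwise edge at node `v` is labelled `v`).  There is an
adaptive adversary, i.e. a choice `miss` of at most one missing edge per round,
such that the resulting trajectory (the intended move succeeds unless the
corresponding incident edge is the missing one) never leaves `{s, s + 1}`;
hence a single agent visits at most `2` nodes. -/
theorem stmt19 (n : ℕ) [NeZero n] (hn : 3 ≤ n) (s : ZMod n)
    (σ : List (Option (ZMod n)) → ℤ)
    (hσ : ∀ h, σ h = -1 ∨ σ h = 0 ∨ σ h = 1) :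
    ∃ miss : ℕ → Option (ZMod n),
      ∀ p : ℕ → ZMod n, p 0 = s →
        (∀ r, p (r + 1) =
          if (σ (List.ofFn (fun i : Fin r => miss i)) = 1 ∧ miss r = some (p r)) ∨
             (σ (List.ofFn (fun i : Fin r => miss i)) = -1 ∧ miss r = some (p r - 1))
          then p r
          else p r + ((σ (List.ofFn (fun i : Fin r => miss i)) : ℤ) : ZMod n)) →
        ∀ r, p r = s ∨ p r = s + 1 :=
  stmt19_general n s σ hσ
end
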